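/- arXiv:0811.3004 — 5 statements merged into one kernel-verified Lean document; each statement's English description precedes it below -/
import Mathlib

section
/- Let F be a characteristic-zero differential field whose field of constants is algebraically closed, and let E ⊇ F be a differential field extension. If x ∈ E satisfies x′ ∈ F, then either x is transcendental over F or x ∈ F. -/
/-- A derivation on a field: an additive map satisfying the Leibniz rule. -/
structure IsDerivation {E : Type*} [Field E] (D : E → E) : Prop where
  map_add : ∀ a b : E, D (a + b) = D a + D b
  leibniz : ∀ a b : E, D (a * b) = D a * b + a * D b

/-!
If `x` is algebraic over `F` with minimal polynomial `p = X ^ n + a X ^ (n - 1) + ⋯` and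
`x′ = c ∈ F`, differentiating `p(x) = 0` gives `pᴰ(x) + p'(x) c = 0`, where `pᴰ` is `p` with its
coefficients differentiated. This relation has degree `< n`, hence vanishes identically, and its
coefficient of `X ^ (n - 1)` says that `z = n x + a` is a constant. The same argument applied to
`z` (with `c = 0`) shows that the minimal polynomial of `z` has constant coefficients, so `z` is
algebraic over the algebraically closed constant field and lies in it. Hence `x = (z - a) / n ∈ F`.
-/

open Polynomial
open scoped Differential

namespace IsDerivation

variable {E : Type*} [Field E] {D : E → E}

def toDerivation (hD : IsDerivation D) : Derivation ℤ E E :=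
  Derivation.mk' (AddMonoidHom.mk' D hD.map_add).toIntLinearMap fun a b => by
    simp only [AddMonoidHom.coe_toIntLinearMap, AddMonoidHom.mk'_apply, hD.leibniz, smul_eq_mul]
    ring

theorem restrict (hD : IsDerivation D) (F : Subfield E) (hF : ∀ a ∈ F, D a ∈ F) :
    IsDerivation fun a : F => (⟨D a, hF a a.2⟩ : F) where
  map_add a b := Subtype.ext (hD.map_add a b)
  leibniz a b := Subtype.ext (hD.leibniz a b)

end IsDerivation

theorem Polynomial.Monic.degree_mapCoeffs_lt {K : Type*} [CommRing K] [Nontrivial K]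
    [Differential K] {p : K[X]} (hp : p.Monic) : (Differential.mapCoeffs p).degree < p.degree := by
  rw [degree_eq_natDegree hp.ne_zero, degree_lt_iff_coeff_zero]
  intro m hm
  rcases hm.eq_or_lt with rfl | hlt
  · rw [Differential.coeff_mapCoeffs, hp.coeff_natDegree, Differential.deriv.map_one_eq_zero]
  · rw [Differential.coeff_mapCoeffs, coeff_eq_zero_of_natDegree_lt hlt, map_zero]

namespace Differential

variable {K A : Type*} [Field K] [CommRing A] [Differential K] [Differential A]
  [Algebra K A] [DifferentialAlgebra K A] {x : A}

theorem mapCoeffs_minpoly_add_derivative_mul_eq_zero (hx : IsIntegral K x) {c : K}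
    (hc : x′ = algebraMap K A c) :
    mapCoeffs (minpoly K x) + derivative (minpoly K x) * C c = 0 := by
  set p := minpoly K x
  have hroot : aeval x (mapCoeffs p + derivative p * C c) = 0 := by
    rw [map_add, map_mul, aeval_C, ← hc, ← deriv_aeval_eq, minpoly.aeval, map_zero]
  have hdeg : (derivative p * C c).degree < p.degree := by
    calc (derivative p * C c).degree ≤ (derivative p).degree + 0 :=
          degree_mul_le_of_le le_rfl degree_C_le
      _ < p.degree := by simpa using degree_derivative_lt (minpoly.monic hx).ne_zero
  exact eq_zero_of_dvd_of_degree_lt (minpoly.dvd K x hroot) <|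
    (degree_add_le _ _).trans_lt (max_lt (minpoly.monic hx).degree_mapCoeffs_lt hdeg)

theorem deriv_nextCoeff_minpoly_add_natDegree_mul [Nontrivial A] (hx : IsIntegral K x) {c : K}
    (hc : x′ = algebraMap K A c) :
    (minpoly K x).nextCoeff′ + (minpoly K x).natDegree * c = 0 := by
  have hpos := minpoly.natDegree_pos hx
  have h := congrArg (coeff · ((minpoly K x).natDegree - 1))
    (mapCoeffs_minpoly_add_derivative_mul_eq_zero hx hc)
  simp only [coeff_add, coeff_mapCoeffs, coeff_mul_C, coeff_derivative, coeff_zero,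
    Nat.sub_add_cancel hpos, (minpoly.monic hx).coeff_natDegree, Nat.cast_sub hpos] at h
  rw [nextCoeff_of_natDegree_pos hpos, ← h]
  ring

theorem deriv_natDegree_minpoly_nsmul_add_nextCoeff [Nontrivial A] (hx : IsIntegral K x) {c : K}
    (hc : x′ = algebraMap K A c) :
    ((minpoly K x).natDegree • x + algebraMap K A (minpoly K x).nextCoeff)′ = 0 := by
  rw [map_add, map_nsmul, hc, deriv_algebraMap, ← map_nsmul, ← map_add, nsmul_eq_mul, add_comm,
    deriv_nextCoeff_minpoly_add_natDegree_mul hx hc, map_zero]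

theorem deriv_coeff_minpoly_eq_zero (hx : IsIntegral K x) (h : x′ = 0) (i : ℕ) :
    ((minpoly K x).coeff i)′ = 0 := by
  have := mapCoeffs_minpoly_add_derivative_mul_eq_zero hx (c := 0) (by rw [h, map_zero])
  rw [map_zero, mul_zero, add_zero] at this
  simpa using congrArg (coeff · i) this

end Differential

theorem Subfield.mem_of_eval_eq_zero_of_coeff_mem {E : Type*} [Field E] (C : Subfield E)
    [IsAlgClosed C] {p : E[X]} (hp : p.Monic) (hdeg : p.natDegree ≠ 0)
    (hC : ∀ i, p.coeff i ∈ C) {z : E} (hz : p.eval z = 0) : z ∈ C := by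
  have hint : IsIntegral C z := .of_aeval_monic_of_isIntegral_coeff hp hdeg
    (by rw [hz]; exact isIntegral_zero)
    fun i => isIntegral_algebraMap (x := (⟨p.coeff i, hC i⟩ : C))
  obtain ⟨c, rfl⟩ := minpoly.mem_range_of_degree_eq_one C z
    (IsAlgClosed.degree_eq_one_of_irreducible C (minpoly.irreducible hint))
  exact c.2

/-- Let `F` be a characteristic-zero differential field whose field of constants is
algebraically closed, and let `E ⊇ F` be a differential field extension.  If `x ∈ E`
satisfies `x' ∈ F`, then either `x` is transcendental over `F` or `x ∈ F`. -/
theorem antiderivative_transcendental_or_mem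
    {E : Type*} [Field E] [CharZero E]
    (D : E → E) (hD : IsDerivation D)
    (F : Subfield E) (hF : ∀ a ∈ F, D a ∈ F)
    (C : Subfield E) (hC : ∀ c : E, c ∈ C ↔ (c ∈ F ∧ D c = 0))
    [IsAlgClosed C]
    (x : E) (hx : D x ∈ F) :
    Transcendental F x ∨ x ∈ F := by
  rw [or_iff_not_imp_left, Transcendental, not_not]
  intro halg
  let _ : Differential E := ⟨hD.toDerivation⟩
  let _ : Differential F := ⟨(hD.restrict F hF).toDerivation⟩
  have : DifferentialAlgebra F E := ⟨fun _ => rfl⟩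
  have hint : IsIntegral F x := halg.isIntegral
  set n := (minpoly F x).natDegree
  set a : F := (minpoly F x).nextCoeff
  set z := n • x + algebraMap F E a
  have hz_const : z′ = 0 :=
    Differential.deriv_natDegree_minpoly_nsmul_add_nextCoeff hint (c := ⟨D x, hx⟩) rfl
  have hz_int : IsIntegral F z := (hint.nsmul n).add isIntegral_algebraMap
  have hzC : z ∈ C := by
    refine C.mem_of_eval_eq_zero_of_coeff_mem ((minpoly.monic hz_int).map _)
      (by simpa using (minpoly.natDegree_pos hz_int).ne') (fun i => ?_)
      (by rw [eval_map_algebraMap, minpoly.aeval])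
    rw [coeff_map, hC]
    exact ⟨SetLike.coe_mem _,
      congrArg Subtype.val (Differential.deriv_coeff_minpoly_eq_zero hz_int hz_const i)⟩
  have hn : (n : E) ≠ 0 := Nat.cast_ne_zero.2 (minpoly.natDegree_pos hint).ne'
  have hx_eq : x = (z - algebraMap F E a) / n := by
    simp only [z, nsmul_eq_mul, add_sub_cancel_right]
    field_simp
  rw [hx_eq]
  exact div_mem (sub_mem ((hC z).1 hzC).1 a.2) (natCast_mem F n)
end

section
/- Let F be a characteristic-zero differential field whose field of constants C is algebraically closed, and let E ⊇ F be a no-new-constants differential field extension. For i = 1,…,n let e_i ∈ E ∖ {0} satisfy e_i′/e_i ∈ F. Then either e_1,…,e_n are algebraically independent over F, or there exists (k_1,…,k_n) ∈ ℤ^n ∖ {0} such that the power product Π_{i=1}^n e_i^{k_i} ∈ F. -/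
def IsDerivation.toDerivation_s4 {E : Type*} [Field E] {D : E → E} (hD : IsDerivation D) :
    Derivation ℤ E E :=
  Derivation.mk' (AddMonoidHom.mk' D hD.map_add).toIntLinearMap fun a b => by
    simp only [AddMonoidHom.coe_toIntLinearMap, AddMonoidHom.mk'_apply, hD.leibniz, smul_eq_mul]
    ring

lemma Finset.prod_zpow_natCast_sub {ι G : Type*} [CommGroupWithZero G] {s : Finset ι} {e : ι → G}
    (he : ∀ i ∈ s, e i ≠ 0) (α β : ι → ℕ) :
    ∏ i ∈ s, e i ^ ((α i : ℤ) - β i) = (∏ i ∈ s, e i ^ α i) / ∏ i ∈ s, e i ^ β i := by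
  rw [← Finset.prod_div_distrib]
  exact Finset.prod_congr rfl fun i hi => by rw [zpow_sub₀ (he i hi), zpow_natCast, zpow_natCast]

open scoped Differential

namespace Differential

variable {K : Type*} [Field K] [Differential K]

lemma deriv_mul_of_ne_zero {m : K} (hm : m ≠ 0) (c : K) :
    (c * m)′ = (c′ + c * logDeriv m) * m := by
  rw [Derivation.leibniz, logDeriv, smul_eq_mul, smul_eq_mul]
  field_simp
  ring

lemma logDeriv_prod_pow {ι : Type*} {s : Finset ι} {e : ι → K} (he : ∀ i ∈ s, e i ≠ 0)
    (α : ι → ℕ) : logDeriv (∏ i ∈ s, e i ^ α i) = ∑ i ∈ s, α i * logDeriv (e i) := by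
  rw [logDeriv_prod _ _ _ fun i hi => pow_ne_zero _ (he i hi)]
  simp only [logDeriv_pow]

variable {F : Subfield K}

/-- The hypothesis `h` is the Wronskian of `c₀ m₀` and `c₁ m₁`, divided by `m₀ m₁`. -/
lemma div_mem_of_wronskian_eq_zero (hconst : ∀ a : K, a′ = 0 → a ∈ F)
    {c₀ c₁ m₀ m₁ : K} (hc₀F : c₀ ∈ F) (hc₁F : c₁ ∈ F) (hc₀ : c₀ ≠ 0) (hc₁ : c₁ ≠ 0)
    (hm₀ : m₀ ≠ 0) (hm₁ : m₁ ≠ 0)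
    (h : c₀ * (c₁′ + c₁ * logDeriv m₁) - (c₀′ + c₀ * logDeriv m₀) * c₁ = 0) :
    m₁ / m₀ ∈ F := by
  have hconst_quot : ((c₁ * m₁) / (c₀ * m₀))′ = 0 := by
    rw [Derivation.leibniz_div, deriv_mul_of_ne_zero hm₀, deriv_mul_of_ne_zero hm₁,
      smul_eq_mul, smul_eq_mul, smul_eq_mul]
    linear_combination ((c₀ * m₀)⁻¹ ^ 2 * m₀ * m₁) * h
  have hquot : m₁ / m₀ = (c₁ * m₁) / (c₀ * m₀) * (c₀ / c₁) := by
    field_simp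
  rw [hquot]
  exact F.mul_mem (hconst _ hconst_quot) (F.div_mem hc₀F hc₁F)

theorem exists_ne_div_mem_of_sum_mul_eq_zero (hF : ∀ a ∈ F, a′ ∈ F)
    (hconst : ∀ a : K, a′ = 0 → a ∈ F) {J : Type*} {m : J → K} (hm0 : ∀ j, m j ≠ 0)
    (hm : ∀ j, logDeriv (m j) ∈ F) (s : Finset J) (c : J → K) (hc : ∀ j, c j ∈ F)
    (hs : ∃ j ∈ s, c j ≠ 0) (hsum : ∑ j ∈ s, c j * m j = 0) :
    ∃ j₁ j₂, j₁ ≠ j₂ ∧ m j₁ / m j₂ ∈ F := by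
  classical
  induction s using Finset.strongInduction generalizing c with
  | H s ih =>
  obtain ⟨j₀, hj₀, hc₀⟩ := hs
  set c' : J → K := fun j => (c j)′ + c j * logDeriv (m j)
  set d : J → K := fun j => c j₀ * c' j - c' j₀ * c j
  have hdF : ∀ j, d j ∈ F := fun j =>
    F.sub_mem (F.mul_mem (hc j₀) (F.add_mem (hF _ (hc j)) (F.mul_mem (hc j) (hm j))))
      (F.mul_mem (F.add_mem (hF _ (hc j₀)) (F.mul_mem (hc j₀) (hm j₀))) (hc j))
  have hdsum : ∑ j ∈ s.erase j₀, d j * m j = 0 := by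
    rw [Finset.sum_erase _ (by simp only [d]; ring)]
    calc ∑ j ∈ s, d j * m j
        = c j₀ * (∑ j ∈ s, c j * m j)′ - c' j₀ * ∑ j ∈ s, c j * m j := by
          simp only [map_sum, deriv_mul_of_ne_zero (hm0 _), Finset.mul_sum,
            ← Finset.sum_sub_distrib, d]
          exact Finset.sum_congr rfl fun j _ => by ring
      _ = 0 := by rw [hsum, map_zero, mul_zero, mul_zero, sub_zero]
  by_cases hd0 : ∃ j ∈ s.erase j₀, d j ≠ 0
  · exact ih _ (Finset.erase_ssubset hj₀) d hdF hd0 hdsum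
  push Not at hd0
  obtain ⟨j₁, hj₁, hc₁⟩ : ∃ j ∈ s.erase j₀, c j ≠ 0 := by
    by_contra! h
    rw [← Finset.add_sum_erase s _ hj₀,
      Finset.sum_eq_zero fun j hj => by rw [h j hj, zero_mul], add_zero] at hsum
    exact mul_ne_zero hc₀ (hm0 j₀) hsum
  exact ⟨j₁, j₀, Finset.ne_of_mem_erase hj₁, div_mem_of_wronskian_eq_zero hconst (hc j₀) (hc j₁)
    hc₀ hc₁ (hm0 j₀) (hm0 j₁) (hd0 j₁ hj₁)⟩

theorem algebraicIndependent_or_exists_prod_zpow_mem (hF : ∀ a ∈ F, a′ ∈ F)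
    (hconst : ∀ a : K, a′ = 0 → a ∈ F) {ι : Type*} [Fintype ι] {e : ι → K}
    (he0 : ∀ i, e i ≠ 0) (he : ∀ i, logDeriv (e i) ∈ F) :
    AlgebraicIndependent F e ∨ ∃ k : ι → ℤ, k ≠ 0 ∧ ∏ i, e i ^ k i ∈ F := by
  classical
  refine or_iff_not_imp_left.2 fun hdep => ?_
  obtain ⟨p, hp, hp0⟩ : ∃ p : MvPolynomial ι F, MvPolynomial.aeval e p = 0 ∧ p ≠ 0 := by
    simpa [algebraicIndependent_iff] using hdep
  obtain ⟨α, β, hαβ, hF_quot⟩ := exists_ne_div_mem_of_sum_mul_eq_zero hF hconst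
    (m := fun α : ι →₀ ℕ => ∏ i, e i ^ α i)
    (fun α => Finset.prod_ne_zero_iff.2 fun i _ => pow_ne_zero _ (he0 i))
    (fun α => by
      rw [logDeriv_prod_pow fun i _ => he0 i]
      exact F.sum_mem fun i _ => F.mul_mem (natCast_mem F _) (he i))
    p.support (fun α => ((p.coeff α : F) : K)) (fun α => (p.coeff α).2)
    (by simpa using MvPolynomial.ne_zero_iff.1 hp0)
    (by rw [← hp, MvPolynomial.aeval_def, MvPolynomial.eval₂_eq']; rfl)
  refine ⟨fun i => α i - β i, fun h => hαβ (Finsupp.ext fun i => ?_), ?_⟩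
  · simpa [sub_eq_zero] using congrFun h i
  · rwa [Finset.prod_zpow_natCast_sub fun i _ => he0 i]

end Differential

theorem ostrowski_exponentials_general
    {E : Type*} [Field E]
    (D : E → E) (hD : IsDerivation D)
    (F : Subfield E) (hF : ∀ a ∈ F, D a ∈ F)
    (hNNC : ∀ a : E, D a = 0 → a ∈ F)
    {n : ℕ} (e : Fin n → E) (he0 : ∀ i, e i ≠ 0) (he : ∀ i, D (e i) / e i ∈ F) :
    AlgebraicIndependent F e ∨
      (∃ k : Fin n → ℤ, k ≠ 0 ∧ (∏ i, e i ^ k i) ∈ F) :=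
  letI : Differential E := ⟨hD.toDerivation_s4⟩
  Differential.algebraicIndependent_or_exists_prod_zpow_mem hF hNNC he0 he

/-- Let `F` be a characteristic-zero differential field whose field of constants `C`
is algebraically closed, and let `E ⊇ F` be a no-new-constants differential field
extension.  If `e₁, …, eₙ ∈ E \ {0}` satisfy `eᵢ'/eᵢ ∈ F`, then either the `eᵢ` are
algebraically independent over `F`, or some nontrivial power product `Π eᵢ^{kᵢ}`
lies in `F`. -/
theorem ostrowski_exponentials
    {E : Type*} [Field E] [CharZero E]
    (D : E → E) (hD : IsDerivation D)
    (F : Subfield E) (hF : ∀ a ∈ F, D a ∈ F)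
    (C : Subfield E) (hC : ∀ c : E, c ∈ C ↔ (c ∈ F ∧ D c = 0))
    [IsAlgClosed C]
    (hNNC : ∀ a : E, D a = 0 → a ∈ F)
    {n : ℕ} (e : Fin n → E) (he0 : ∀ i, e i ≠ 0) (he : ∀ i, D (e i) / e i ∈ F) :
    AlgebraicIndependent F e ∨
      (∃ k : Fin n → ℤ, k ≠ 0 ∧ (∏ i, e i ^ k i) ∈ F) :=
  ostrowski_exponentials_general D hD F hF hNNC e he0 he
end

section
/- Let R be an integral domain containing ℚ (i.e. a ℚ-algebra that is an integral domain), let P ∈ R[y_1,…,y_n] be a polynomial in n variables, let r_1,…,r_n ∈ R, and let P̃ := P(y_1+r_1,…,y_n+r_n) be the translate of P. If P divides P̃ in R[y_1,…,y_n], then P̃ = P; moreover, for every j, the homogeneous component H_j of P of total degree j satisfies Σ_{i=1}^n r_i·(∂H_j/∂y_i) = 0, and in particular H_j(y_1+r_1,…,y_n+r_n) = H_j for every j and Σ_{i=1}^n r_i·(∂P/∂y_i) = 0. -/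
/-!
Let `ψ Q := Q(y + t r) ∈ R[y][t]`. The map `ψ` is injective, turns the translation by `r` into
`t ↦ t + 1`, and intertwines `d/dt` with `D := Σᵢ rᵢ ∂ᵢ`. If `P(y + r) = P Q`, comparing degrees
and leading coefficients in `t` of `ψ P (t + 1) = ψ P (t) · ψ Q (t)` forces `ψ Q = 1`. Then `ψ P`
is `1`-periodic, hence constant in characteristic zero, so `D P = 0`. Since `D` lowers degrees by
exactly one, `D Hⱼ₊₁` is the homogeneous component of degree `j` of `D P`, so every `D Hⱼ`
vanishes; then `ψ Hⱼ` has zero `t`-derivative, hence is constant, and `Hⱼ(y + r) = Hⱼ`.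
-/

open MvPolynomial

namespace Polynomial

variable {R : Type*} [CommRing R] [IsDomain R]

theorem eq_one_of_taylor_eq_mul {f g : R[X]} {a : R} (hf : f ≠ 0) (h : taylor a f = f * g) :
    g = 1 := by
  have hlc : g.leadingCoeff = 1 := by
    have := congrArg leadingCoeff h
    rw [leadingCoeff_taylor, leadingCoeff_mul] at this
    exact (mul_eq_left₀ (leadingCoeff_ne_zero.mpr hf)).mp this.symm
  have hg : g ≠ 0 := by rintro rfl; simp at hlc
  have hdeg : g.natDegree = 0 := by
    have := congrArg natDegree h
    rw [natDegree_taylor, natDegree_mul hf hg] at this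
    omega
  rw [eq_C_of_natDegree_eq_zero hdeg, ← hdeg, ← leadingCoeff, hlc, C_1]

theorem eq_C_of_taylor_eq_self [CharZero R] {f : R[X]} {a : R} (ha : a ≠ 0)
    (h : taylor a f = f) : f = C (f.eval 0) := by
  have heval (m : ℕ) : f.eval (m * a) = f.eval 0 := by
    induction m with
    | zero => simp
    | succ m ih => rw [Nat.cast_succ, add_one_mul, ← taylor_eval, h, ih]
  apply eq_of_infinite_eval_eq
  refine Set.infinite_of_injective_forall_mem (f := fun m : ℕ => (m : R) * a) ?_ ?_
  · exact (mul_left_injective₀ ha).comp Nat.cast_injective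
  · intro m
    simp [heval m]

end Polynomial

namespace MvPolynomial

variable {R σ : Type*} [CommRing R]

noncomputable def translate (r : σ → R) : MvPolynomial σ R →ₐ[R] MvPolynomial σ R :=
  aeval fun i => X i + C (r i)

/-- `alongLine r Q` is `Q(y + t r)`, seen as a polynomial in `t` over `R[y]`. -/
noncomputable def alongLine (r : σ → R) : MvPolynomial σ R →ₐ[R] Polynomial (MvPolynomial σ R) :=
  aeval fun i => Polynomial.C (X i) + Polynomial.X * Polynomial.C (C (r i))

theorem eval_C_alongLine (r : σ → R) (s : R) (Q : MvPolynomial σ R) :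
    (alongLine r Q).eval (C s) = translate (s • r) Q := by
  have : ((Polynomial.aeval (C s)).restrictScalars R).comp (alongLine r) = translate (s • r) := by
    refine algHom_ext fun i => ?_
    simp [alongLine, translate]
    ring
  exact DFunLike.congr_fun this Q

theorem eval_zero_alongLine (r : σ → R) (Q : MvPolynomial σ R) : (alongLine r Q).eval 0 = Q := by
  simpa [translate] using eval_C_alongLine r 0 Q

theorem eval_one_alongLine (r : σ → R) (Q : MvPolynomial σ R) :
    (alongLine r Q).eval 1 = translate r Q := by
  simpa using eval_C_alongLine r 1 Q

theorem alongLine_injective (r : σ → R) : Function.Injective (alongLine r) :=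
  Function.LeftInverse.injective (g := Polynomial.eval 0) (eval_zero_alongLine r)

theorem alongLine_translate (r : σ → R) (Q : MvPolynomial σ R) :
    alongLine r (translate r Q) = Polynomial.taylor 1 (alongLine r Q) := by
  have : (alongLine r).comp (translate r) =
      ((Polynomial.taylorAlgHom 1).restrictScalars R).comp (alongLine r) := by
    refine algHom_ext fun i => ?_
    simp [alongLine, translate]
    ring
  exact DFunLike.congr_fun this Q

theorem translate_eq_self_of_dvd [IsDomain R] {r : σ → R} {P : MvPolynomial σ R} (h : P ∣ translate r P) :
    translate r P = P := by
  rcases eq_or_ne P 0 with rfl | hP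
  · exact map_zero _
  obtain ⟨Q, hQ⟩ := h
  have hline : Polynomial.taylor 1 (alongLine r P) = alongLine r P * alongLine r Q := by
    rw [← alongLine_translate, hQ, map_mul]
  have hQ1 : Q = 1 := alongLine_injective r <| by
    rw [map_one]
    exact Polynomial.eq_one_of_taylor_eq_mul ((map_ne_zero_iff _ (alongLine_injective r)).mpr hP)
      hline
  rw [hQ, hQ1, mul_one]

theorem homogeneousComponent_pderiv (i : σ) (j : ℕ) (Q : MvPolynomial σ R) :
    homogeneousComponent j (pderiv i Q) = pderiv i (homogeneousComponent (j + 1) Q) := by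
  ext m
  simp [coeff_homogeneousComponent, coeff_pderiv]

section directionalDeriv

variable [Fintype σ]

noncomputable def directionalDeriv (r : σ → R) :
    Derivation R (MvPolynomial σ R) (MvPolynomial σ R) :=
  ∑ i, (C (r i) : MvPolynomial σ R) • pderiv i

theorem directionalDeriv_apply (r : σ → R) (Q : MvPolynomial σ R) :
    directionalDeriv r Q = ∑ i, C (r i) * pderiv i Q := by
  rw [directionalDeriv, ← Derivation.coeFnAddMonoidHom_apply, map_sum, Finset.sum_apply]
  rfl

theorem directionalDeriv_X (r : σ → R) (i : σ) : directionalDeriv r (X i) = C (r i) := by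
  classical
  simp [directionalDeriv_apply, pderiv_X, Pi.single_apply]

theorem homogeneousComponent_directionalDeriv (r : σ → R) (j : ℕ) (Q : MvPolynomial σ R) :
    homogeneousComponent j (directionalDeriv r Q) =
      directionalDeriv r (homogeneousComponent (j + 1) Q) := by
  simp only [directionalDeriv_apply, map_sum, homogeneousComponent_C_mul,
    homogeneousComponent_pderiv]

theorem directionalDeriv_homogeneousComponent_eq_zero {r : σ → R} {Q : MvPolynomial σ R}
    (h : directionalDeriv r Q = 0) (j : ℕ) : directionalDeriv r (homogeneousComponent j Q) = 0 := by
  cases j with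
  | zero => rw [homogeneousComponent_zero, derivation_C]
  | succ j => rw [← homogeneousComponent_directionalDeriv, h, map_zero]

theorem derivative_alongLine (r : σ → R) (Q : MvPolynomial σ R) :
    Polynomial.derivative (alongLine r Q) = alongLine r (directionalDeriv r Q) := by
  induction Q using MvPolynomial.induction_on with
  | C a => simp [alongLine]
  | add p q hp hq => simp only [map_add, hp, hq]
  | mul_X p i hp =>
    have hX : alongLine r (X i) = Polynomial.C (X i) + Polynomial.X * Polynomial.C (C (r i)) :=
      aeval_X _ i
    have hC : alongLine r (C (r i)) = Polynomial.C (C (r i)) := by simp [alongLine]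
    rw [map_mul, Polynomial.derivative_mul, hp, Derivation.leibniz, directionalDeriv_X,
      smul_eq_mul, smul_eq_mul, map_add, map_mul, map_mul, hX, hC]
    simp only [Polynomial.derivative_add, Polynomial.derivative_mul, Polynomial.derivative_C,
      Polynomial.derivative_X]
    ring

variable [IsDomain R] [CharZero R]

theorem directionalDeriv_eq_zero_of_translate_eq_self {r : σ → R} {Q : MvPolynomial σ R}
    (h : translate r Q = Q) : directionalDeriv r Q = 0 := by
  have hconst := Polynomial.eq_C_of_taylor_eq_self one_ne_zero
    (by rw [← alongLine_translate, h] : Polynomial.taylor 1 (alongLine r Q) = alongLine r Q)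
  apply alongLine_injective r
  rw [← derivative_alongLine, hconst, Polynomial.derivative_C, map_zero]

theorem translate_eq_self_of_directionalDeriv_eq_zero {r : σ → R} {Q : MvPolynomial σ R}
    (h : directionalDeriv r Q = 0) : translate r Q = Q := by
  have hconst := Polynomial.eq_C_of_derivative_eq_zero
    (by rw [derivative_alongLine, h, map_zero] : Polynomial.derivative (alongLine r Q) = 0)
  calc translate r Q = (alongLine r Q).eval 1 := (eval_one_alongLine r Q).symm
    _ = (alongLine r Q).eval 0 := by rw [hconst, Polynomial.eval_C, Polynomial.eval_C]
    _ = Q := eval_zero_alongLine r Q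

end directionalDeriv

end MvPolynomial

/-- Let `R` be an integral domain containing `ℚ`, let `P ∈ R[y₁,…,yₙ]`, let
`r₁, …, rₙ ∈ R`, and let `P̃ := P(y₁ + r₁, …, yₙ + rₙ)` be the translate of `P`.
If `P` divides `P̃`, then `P̃ = P`; moreover every homogeneous component `Hⱼ` of `P`
satisfies `Σᵢ rᵢ · ∂Hⱼ/∂yᵢ = 0`, and in particular each `Hⱼ` is invariant under the
translation and `Σᵢ rᵢ · ∂P/∂yᵢ = 0`. -/
theorem translate_dvd_self_eq
    {R : Type*} [CommRing R] [IsDomain R] [Algebra ℚ R]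
    {n : ℕ} (P : MvPolynomial (Fin n) R) (r : Fin n → R)
    (hdvd : P ∣ (aeval fun i => (X i + C (r i) : MvPolynomial (Fin n) R)) P) :
    (aeval fun i => (X i + C (r i) : MvPolynomial (Fin n) R)) P = P ∧
    (∀ j : ℕ, ∑ i, C (r i) * pderiv i (homogeneousComponent j P) = 0) ∧
    (∀ j : ℕ, (aeval fun i => (X i + C (r i) : MvPolynomial (Fin n) R))
        (homogeneousComponent j P) = homogeneousComponent j P) ∧
    ∑ i, C (r i) * pderiv i P = 0 := by
  have := algebraRat.charZero R
  have hP : translate r P = P := translate_eq_self_of_dvd hdvd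
  have hD := directionalDeriv_eq_zero_of_translate_eq_self hP
  have hH := directionalDeriv_homogeneousComponent_eq_zero hD
  refine ⟨hP, fun j => ?_, fun j => translate_eq_self_of_directionalDeriv_eq_zero (hH j), ?_⟩
  · simpa only [directionalDeriv_apply] using hH j
  · simpa only [directionalDeriv_apply] using hD
end

section
/- Let F be a characteristic-zero differential field whose field of constants is algebraically closed, and let E ⊇ F be a no-new-constants differential field extension containing elements x_1,…,x_l with x_i′ ∈ F that are algebraically independent over F, so that the subring F[x_1,…,x_l] of E is a polynomial ring closed under the derivation of E. If R ∈ F[x_1,…,x_l] is an irreducible polynomial, then R and its derivative R′ (the derivative of R taken in E, which again lies in F[x_1,…,x_l]) are relatively prime in F[x_1,…,x_l]. -/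
namespace IsDerivation

variable {E : Type*} [Field E] {D : E → E}

theorem map_zero (hD : IsDerivation D) : D 0 = 0 := by
  simpa using hD.map_add 0 0

theorem map_div_eq_zero (hD : IsDerivation D) {a y c : E} (ha : a ≠ 0)
    (hy : D y = c * y) (hac : D a = c * a) : D (y / a) = 0 := by
  have h := hD.leibniz (y / a) a
  rw [div_mul_cancel₀ y ha, hy, hac, div_mul_comm, mul_div_cancel_right₀ c ha,
    right_eq_add] at h
  exact (mul_eq_zero.mp h).resolve_right ha

def restrict_s8 (hD : IsDerivation D) (F : Subfield E) (hF : ∀ a ∈ F, D a ∈ F) : F →+ F where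
  toFun a := ⟨D a, hF a a.2⟩
  map_zero' := Subtype.ext hD.map_zero
  map_add' a b := Subtype.ext (hD.map_add a b)

end IsDerivation

namespace MvPolynomial

theorem exists_eq_C_mul_of_dvd_of_totalDegree_le {σ K : Type*} [CommRing K] [IsDomain K]
    {P R : MvPolynomial σ K} (hR : R ≠ 0) (hdvd : R ∣ P) (hdeg : P.totalDegree ≤ R.totalDegree) :
    ∃ c, P = C c * R := by
  obtain ⟨Q, rfl⟩ := hdvd
  rcases eq_or_ne Q 0 with rfl | hQ
  · exact ⟨0, by simp⟩
  rw [totalDegree_mul_of_isDomain hR hQ] at hdeg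
  exact ⟨Q.coeff 0, by rw [mul_comm, ← totalDegree_eq_zero_iff_eq_C.mp (by omega)]⟩

section derivPoly

variable {σ K : Type*} [Fintype σ] [CommSemiring K]

/-- The derivative of `P` under the derivation of `K[X]` that acts on coefficients by `δ` and
sends `X i` to `v i`. -/
noncomputable def derivPoly (δ : K →+ K) (v : σ → K) (P : MvPolynomial σ K) : MvPolynomial σ K :=
  AddMonoidAlgebra.map δ P + ∑ i, C (v i) * pderiv i P

theorem coeff_derivPoly (δ : K →+ K) (v : σ → K) (P : MvPolynomial σ K) (m : σ →₀ ℕ) :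
    coeff m (derivPoly δ v P) =
      δ (coeff m P) + ∑ i, v i * (coeff (m + Finsupp.single i 1) P * (m i + 1)) := by
  simp only [derivPoly, coeff_add, coeff_sum, coeff_C_mul, coeff_pderiv]
  rfl

theorem coeff_derivPoly_of_totalDegree_le (δ : K →+ K) (v : σ → K) {P : MvPolynomial σ K}
    {m : σ →₀ ℕ} (hm : P.totalDegree ≤ m.degree) :
    coeff m (derivPoly δ v P) = δ (coeff m P) := by
  rw [coeff_derivPoly, Finset.sum_eq_zero, add_zero]
  intro i _
  rw [coeff_eq_zero_of_totalDegree_lt, zero_mul, mul_zero]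
  rw [← Finsupp.degree_apply, map_add, Finsupp.degree_single]
  omega

theorem totalDegree_derivPoly_le (δ : K →+ K) (v : σ → K) (P : MvPolynomial σ K) :
    (derivPoly δ v P).totalDegree ≤ P.totalDegree := by
  refine Finset.sup_le fun m hm => le_of_not_gt fun hlt => mem_support_iff.mp hm ?_
  rw [coeff_derivPoly_of_totalDegree_le δ v hlt.le, coeff_eq_zero_of_totalDegree_lt hlt, map_zero]

theorem exists_map_eq_mul_of_derivPoly_eq_C_mul (δ : K →+ K) (v : σ → K) {R : MvPolynomial σ K}
    {c : K} (hR : R ≠ 0) (h : derivPoly δ v R = C c * R) : ∃ a ≠ 0, δ a = c * a := by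
  obtain ⟨M, hM, hdeg⟩ :=
    Finset.exists_mem_eq_sup R.support (support_nonempty.mpr hR) fun s => s.sum fun _ e => e
  refine ⟨coeff M R, mem_support_iff.mp hM, ?_⟩
  rw [← coeff_derivPoly_of_totalDegree_le δ v hdeg.le, h, coeff_C_mul]

@[simp]
theorem derivPoly_C (δ : K →+ K) (v : σ → K) (a : K) :
    derivPoly δ v (C a) = C (δ a) := by
  classical
  simp only [derivPoly, pderiv_C, mul_zero, Finset.sum_const_zero, add_zero]
  ext m
  rw [coeff_addMonoidAlgebraMap, coeff_C, coeff_C]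
  split_ifs <;> simp

theorem derivPoly_add (δ : K →+ K) (v : σ → K) (P Q : MvPolynomial σ K) :
    derivPoly δ v (P + Q) = derivPoly δ v P + derivPoly δ v Q := by
  ext m
  simp only [coeff_derivPoly, coeff_add, map_add, mul_add, add_mul, Finset.sum_add_distrib]
  ring

theorem derivPoly_mul_X (δ : K →+ K) (v : σ → K) (P : MvPolynomial σ K) (i : σ) :
    derivPoly δ v (P * X i) = derivPoly δ v P * X i + C (v i) * P := by
  classical
  have hmap : AddMonoidAlgebra.map δ (P * X i) = AddMonoidAlgebra.map δ P * X i := by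
    ext m
    rw [coeff_addMonoidAlgebraMap, coeff_mul_X', coeff_mul_X']
    split_ifs <;> simp
  simp only [derivPoly, hmap, Derivation.leibniz, pderiv_X, smul_eq_mul, mul_add,
    Finset.sum_add_distrib, Pi.single_apply, mul_ite, mul_one, mul_zero, Finset.sum_ite_eq,
    Finset.mem_univ, if_true, add_mul, Finset.sum_mul]
  ring_nf

theorem aeval_derivPoly {E : Type*} [Field E] [Algebra K E] {D : E → E} (hD : IsDerivation D)
    {δ : K →+ K} (hδ : ∀ a, D (algebraMap K E a) = algebraMap K E (δ a))
    {x : σ → E} {v : σ → K} (hv : ∀ i, D (x i) = algebraMap K E (v i)) (P : MvPolynomial σ K) :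
    aeval x (derivPoly δ v P) = D (aeval x P) := by
  induction P using MvPolynomial.induction_on with
  | C a => rw [derivPoly_C, aeval_C, aeval_C, hδ]
  | add P Q hP hQ => rw [derivPoly_add, map_add, map_add, hP, hQ, hD.map_add]
  | mul_X P i hP =>
    rw [derivPoly_mul_X, map_add, map_mul, map_mul, map_mul, aeval_X, aeval_C, hP, hD.leibniz, hv]
    ring

end derivPoly

end MvPolynomial

open MvPolynomial in
theorem irreducible_isRelPrime_deriv_general
    {E : Type*} [Field E]
    (D : E → E) (hD : IsDerivation D)
    (F : Subfield E) (hF : ∀ a ∈ F, D a ∈ F)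
    (hNNC : ∀ a : E, D a = 0 → a ∈ F)
    {l : ℕ} (x : Fin l → E) (hx : ∀ i, D (x i) ∈ F)
    (hind : AlgebraicIndependent F x)
    (R R' : MvPolynomial (Fin l) F)
    (hirr : Irreducible R)
    (hR' : MvPolynomial.aeval x R' = D (MvPolynomial.aeval x R)) :
    IsRelPrime R R' := by
  have hderiv (P) : aeval x (derivPoly (hD.restrict_s8 F hF) (fun i => ⟨D (x i), hx i⟩) P) =
      D (aeval x P) :=
    aeval_derivPoly hD (fun _ => rfl) (fun _ => rfl) P
  obtain rfl : R' = derivPoly (hD.restrict_s8 F hF) (fun i => ⟨D (x i), hx i⟩) R :=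
    hind (by rw [hR', hderiv])
  refine hirr.isRelPrime_iff_not_dvd.mpr fun hdvd => ?_
  obtain ⟨c, hc⟩ := exists_eq_C_mul_of_dvd_of_totalDegree_le hirr.ne_zero hdvd
    (totalDegree_derivPoly_le _ _ R)
  obtain ⟨a, ha, hδa⟩ := exists_map_eq_mul_of_derivPoly_eq_C_mul _ _ hirr.ne_zero hc
  have ha' : (a : E) ≠ 0 := Subtype.coe_ne_coe.mpr ha
  have hDy : D (aeval x R) = c * aeval x R := by rw [← hderiv, hc, map_mul, aeval_C]; rfl
  have hyF : aeval x R ∈ F := by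
    have hDa : D a = c * a := congrArg Subtype.val hδa
    simpa [ha'] using mul_mem (hNNC _ (hD.map_div_eq_zero ha' hDy hDa)) a.2
  have hRC : R = C ⟨_, hyF⟩ := hind (by rw [aeval_C]; rfl)
  rw [hRC] at hirr
  have hy0 : (⟨_, hyF⟩ : F) ≠ 0 := fun h => hirr.ne_zero (by rw [h, map_zero])
  exact hirr.not_isUnit ((isUnit_iff_ne_zero.mpr hy0).map C)

/-- Let `F` be a characteristic-zero differential field with algebraically closed
field of constants, and let `E ⊇ F` be a no-new-constants differential field
extension containing algebraically independent antiderivatives `x₁, …, x_l` of `F`,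
so that `F[x₁,…,x_l] ⊆ E` is a polynomial ring closed under the derivation.  If
`R ∈ F[x₁,…,x_l]` is an irreducible polynomial, then `R` and its derivative `R'`
(taken in `E`, where it again lies in `F[x₁,…,x_l]`) are relatively prime. -/
theorem irreducible_isRelPrime_deriv
    {E : Type*} [Field E] [CharZero E]
    (D : E → E) (hD : IsDerivation D)
    (F : Subfield E) (hF : ∀ a ∈ F, D a ∈ F)
    (C : Subfield E) (hC : ∀ c : E, c ∈ C ↔ (c ∈ F ∧ D c = 0))
    [IsAlgClosed C]
    (hNNC : ∀ a : E, D a = 0 → a ∈ F)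
    {l : ℕ} (x : Fin l → E) (hx : ∀ i, D (x i) ∈ F)
    (hind : AlgebraicIndependent F x)
    (R R' : MvPolynomial (Fin l) F)
    (hirr : Irreducible R)
    (hR' : MvPolynomial.aeval x R' = D (MvPolynomial.aeval x R)) :
    IsRelPrime R R' :=
  irreducible_isRelPrime_deriv_general D hD F hF hNNC x hx hind R R' hirr hR'
end

section
/- Let F be a characteristic-zero differential field whose field of constants C is algebraically closed, and let E = F(e_1,…,e_n) be a no-new-constants differential field extension of F, where e_1,…,e_n ∈ E ∖ {0} satisfy e_i′/e_i ∈ F and are algebraically independent over F. Then for every u ∈ E there exist t ∈ ℕ and power products p_1,…,p_t, each of the form p_j = Π_{i=1}^n e_i^{m_{ji}} with m_{ji} ∈ ℤ, such that F⟨u⟩ = F(p_1,…,p_t), where F⟨u⟩ denotes the differential subfield of E generated by F and u. -/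
/-- The smallest subfield containing a set `s` which is closed under the map `D`
(the differential subfield generated by `s`). -/
def diffSubfieldClosure {E : Type*} [Field E] (D : E → E) (s : Set E) : Subfield E :=
  sInf {L : Subfield E | s ⊆ ↑L ∧ ∀ a ∈ L, D a ∈ L}

/-!
Let `K = F⟨u⟩` and let `H ⊆ ℤⁿ` be the group of exponents `m` with `e^m ∈ K`; it is finitely
generated, and the power products `p` of a generating family give `F(p) ⊆ K`. Since the
logarithmic derivative of every power product lies in `F`, `F(p)` is a differential field, so
`K ⊆ F(p)` reduces to `u ∈ F(p)`.

Write `u = A / B` with `A = ∑ aₘ eᵐ`, `B = ∑ bₘ eᵐ` and `aₘ, bₘ ∈ F`. Then `∑ (aₘ - u bₘ) eᵐ = 0`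
is a relation with coefficients in `K`. Power products from distinct cosets of `H` are linearly
independent over `K`: differentiating a minimal relation and subtracting a multiple of it
produces a shorter one, which forces the ratio of two of its terms to be a constant, hence in `F`
by the no-new-constants hypothesis. So the relation holds coset by coset, and on a coset
`r + H` where the part of `B` is nonzero, `u` is the quotient of two `F`-combinations of the
`e^(m - r)` with `m - r ∈ H`, which lie in `F(p)`.
-/

open scoped Differential

namespace Differential

variable {E : Type*} [Field E] [Differential E]

lemma deriv_eq_logDeriv_mul {a : E} (ha : a ≠ 0) : a′ = logDeriv a * a := by
  rw [logDeriv, div_mul_cancel₀ _ ha]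

lemma logDeriv_inv (a : E) : logDeriv a⁻¹ = -logDeriv a := by
  rcases eq_or_ne a 0 with rfl | ha
  · simp
  · rw [inv_eq_one_div, logDeriv_div _ _ one_ne_zero ha, logDeriv_one, zero_sub]

lemma logDeriv_zpow (a : E) (n : ℤ) : logDeriv (a ^ n) = n * logDeriv a := by
  cases n with
  | ofNat n => simp
  | negSucc n =>
    rw [zpow_negSucc, logDeriv_inv, logDeriv_pow, Int.cast_negSucc]
    ring

lemma deriv_div_eq_zero_of_logDeriv_eq {a b : E} (ha : a ≠ 0) (hb : b ≠ 0)
    (h : logDeriv a = logDeriv b) : (a / b)′ = 0 := by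
  rw [← logDeriv_eq_zero, logDeriv_div _ _ ha hb, h, sub_self]

end Differential

open Differential

section Independence

variable {E : Type*} [Field E] [Differential E]

theorem Subfield.deriv_mem_closure {s : Set E} (hs : ∀ x ∈ s, x′ ∈ Subfield.closure s)
    {x : E} (hx : x ∈ Subfield.closure s) : x′ ∈ Subfield.closure s := by
  induction hx using Subfield.closure_induction with
  | mem x hx => exact hs x hx
  | one => simp
  | add x y _ _ hx hy => rw [map_add]; exact add_mem hx hy
  | neg x _ hx => rw [map_neg]; exact neg_mem hx
  | inv x hx₀ hx =>
    rw [Derivation.leibniz_inv, smul_eq_mul]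
    exact mul_mem (neg_mem (pow_mem (inv_mem hx₀) 2)) hx
  | mul x y hx₀ hy₀ hx hy =>
    rw [Derivation.leibniz, smul_eq_mul, smul_eq_mul]
    exact add_mem (mul_mem hx₀ hy) (mul_mem hy₀ hx)

theorem div_mem_of_logDeriv_mul_eq {K : Subfield E} (hconst : ∀ x : E, x′ = 0 → x ∈ K)
    {a b M N : E} (ha : a ∈ K) (hb : b ∈ K) (ha₀ : a ≠ 0) (hb₀ : b ≠ 0) (hM : M ≠ 0) (hN : N ≠ 0)
    (h : logDeriv (a * M) = logDeriv (b * N)) : M / N ∈ K := by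
  have hratio : M / N = a * M / (b * N) * (b / a) := by field_simp
  rw [hratio]
  exact mul_mem (hconst _ (deriv_div_eq_zero_of_logDeriv_eq (mul_ne_zero ha₀ hM)
    (mul_ne_zero hb₀ hN) h)) (div_mem hb ha)

theorem linearIndependent_of_logDeriv_mem {ι : Type*} (K : Subfield E) (hK : ∀ x ∈ K, x′ ∈ K)
    (hconst : ∀ x : E, x′ = 0 → x ∈ K) {M : ι → E} (hM₀ : ∀ i, M i ≠ 0)
    (hM : ∀ i, logDeriv (M i) ∈ K) (hMK : Pairwise fun i j ↦ M i / M j ∉ K) :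
    LinearIndependent K M := by
  classical
  rw [linearIndependent_iff']
  intro S
  induction S using Finset.strongInduction with
  | H S ih =>
  intro g hsum i₁ hi₁
  by_contra hg₁
  simp only [Subfield.smul_def, smul_eq_mul] at hsum
  set y : ι → E := fun i ↦ g i * M i
  have hg₁' : (g i₁ : E) ≠ 0 := by exact_mod_cast hg₁
  have hy₁ : y i₁ ≠ 0 := mul_ne_zero hg₁' (hM₀ i₁)
  set c := logDeriv (y i₁)
  have hc : c ∈ K := by
    simp only [c, y, logDeriv_mul _ _ hg₁' (hM₀ i₁)]
    exact add_mem (div_mem (hK _ (g i₁).2) (g i₁).2) (hM i₁)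
  -- Subtracting `c` times the relation from its derivative cancels the `i₁` term.
  let g' : ι → K := fun i ↦ ⟨(g i : E)′ + g i * logDeriv (M i) - c * g i,
    sub_mem (add_mem (hK _ (g i).2) (mul_mem (g i).2 (hM i))) (mul_mem hc (g i).2)⟩
  have hy' : ∀ i, (y i)′ - c * y i = g' i * M i := by
    intro i
    simp only [y, g', Derivation.leibniz, smul_eq_mul, deriv_eq_logDeriv_mul (hM₀ i)]
    ring
  have hg'₁ : g' i₁ = 0 := by
    have := hy' i₁
    rw [deriv_eq_logDeriv_mul hy₁, sub_self, eq_comm] at this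
    exact_mod_cast (mul_eq_zero.mp this).resolve_right (hM₀ i₁)
  have hsum' : ∑ i ∈ S.erase i₁, g' i • M i = 0 := by
    rw [Finset.sum_erase _ (by simp [hg'₁])]
    simp only [Subfield.smul_def, smul_eq_mul, ← hy', Finset.sum_sub_distrib, ← Finset.mul_sum,
      ← map_sum]
    simp [y, hsum]
  have hg' := ih _ (Finset.erase_ssubset hi₁) g' hsum'
  have hsingle : ∀ i ∈ S, i ≠ i₁ → g i = 0 := by
    intro i hi hne
    by_contra hgi
    have hyi : y i ≠ 0 := mul_ne_zero (by exact_mod_cast hgi) (hM₀ i)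
    have hlog : logDeriv (y i) = c := by
      have := hy' i
      rw [hg' i (Finset.mem_erase.mpr ⟨hne, hi⟩), ZeroMemClass.coe_zero, zero_mul, sub_eq_zero,
        deriv_eq_logDeriv_mul hyi] at this
      exact mul_right_cancel₀ hyi this
    exact hMK hne (div_mem_of_logDeriv_mul_eq hconst (g i).2 (g i₁).2 (by exact_mod_cast hgi)
      hg₁' (hM₀ i) (hM₀ i₁) hlog)
  rw [Finset.sum_eq_single i₁ (fun i hi hne ↦ by simp [hsingle i hi hne]) (absurd hi₁)] at hsum
  exact hy₁ hsum

end Independence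

section PowerProduct

variable {ι E : Type*} [Fintype ι] [Field E]

def powerProduct (e : ι → E) (m : ι → ℤ) : E := ∏ i, e i ^ m i

variable {e : ι → E}

@[simp] lemma powerProduct_zero : powerProduct e 0 = 1 := by simp [powerProduct]

lemma powerProduct_ne_zero (he : ∀ i, e i ≠ 0) (m : ι → ℤ) : powerProduct e m ≠ 0 :=
  Finset.prod_ne_zero_iff.mpr fun i _ ↦ zpow_ne_zero _ (he i)

lemma powerProduct_add (he : ∀ i, e i ≠ 0) (m m' : ι → ℤ) :
    powerProduct e (m + m') = powerProduct e m * powerProduct e m' := by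
  simp only [powerProduct, Pi.add_apply, zpow_add₀ (he _), Finset.prod_mul_distrib]

lemma powerProduct_zsmul (z : ℤ) (m : ι → ℤ) : powerProduct e (z • m) = powerProduct e m ^ z := by
  simp only [powerProduct, Pi.smul_apply, smul_eq_mul, mul_comm z, zpow_mul, Finset.prod_zpow]

lemma powerProduct_sub_mul (he : ∀ i, e i ≠ 0) (m r : ι → ℤ) :
    powerProduct e (m - r) * powerProduct e r = powerProduct e m := by
  rw [← powerProduct_add he, sub_add_cancel]

lemma powerProduct_sub (he : ∀ i, e i ≠ 0) (m r : ι → ℤ) :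
    powerProduct e (m - r) = powerProduct e m / powerProduct e r :=
  eq_div_of_mul_eq (powerProduct_ne_zero he r) (powerProduct_sub_mul he m r)

lemma sum_mul_powerProduct_eq (he : ∀ i, e i ≠ 0) (T : Finset (ι → ℤ)) (x : (ι → ℤ) → E)
    (r : ι → ℤ) : ∑ m ∈ T, x m * powerProduct e m =
      (∑ m ∈ T, x m * powerProduct e (m - r)) * powerProduct e r := by
  simp only [Finset.sum_mul, mul_assoc, powerProduct_sub_mul he]

lemma powerProduct_single [DecidableEq ι] (i : ι) : powerProduct e (Pi.single i 1) = e i := by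
  rw [powerProduct, Finset.prod_eq_single i (fun j _ hj ↦ by simp [hj]) (by simp)]
  simp

lemma logDeriv_powerProduct [Differential E] (he : ∀ i, e i ≠ 0) (m : ι → ℤ) :
    logDeriv (powerProduct e m) = ∑ i, m i * logDeriv (e i) := by
  rw [powerProduct, logDeriv_prod _ _ _ fun i _ ↦ zpow_ne_zero _ (he i)]
  simp only [Differential.logDeriv_zpow]

lemma logDeriv_powerProduct_mem [Differential E] {L : Subfield E} (he : ∀ i, e i ≠ 0)
    (hL : ∀ i, logDeriv (e i) ∈ L) (m : ι → ℤ) : logDeriv (powerProduct e m) ∈ L := by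
  rw [logDeriv_powerProduct he]
  exact sum_mem fun i _ ↦ mul_mem (intCast_mem L _) (hL i)

def exponentSubmodule (he : ∀ i, e i ≠ 0) (L : Subfield E) : Submodule ℤ (ι → ℤ) where
  carrier := {m | powerProduct e m ∈ L}
  add_mem' {m m'} hm hm' := show powerProduct e (m + m') ∈ L by
    rw [powerProduct_add he]; exact mul_mem hm hm'
  zero_mem' := show powerProduct e 0 ∈ L by rw [powerProduct_zero]; exact one_mem L
  smul_mem' z m hm := show powerProduct e (z • m) ∈ L by
    rw [powerProduct_zsmul]; exact zpow_mem hm z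

@[simp] lemma mem_exponentSubmodule {he : ∀ i, e i ≠ 0} {L : Subfield E} {m : ι → ℤ} :
    m ∈ exponentSubmodule he L ↔ powerProduct e m ∈ L := Iff.rfl

end PowerProduct

section Representation

variable {ι E : Type*} [Fintype ι] [Field E] {e : ι → E}

theorem exists_mul_sum_eq_sum_of_mem_closure (F : Subfield E) (he : ∀ i, e i ≠ 0) {u : E}
    (hu : u ∈ Subfield.closure (↑F ∪ Set.range e)) :
    ∃ (S : Finset (ι → ℤ)) (a b : (ι → ℤ) → E), (∀ m, a m ∈ F) ∧ (∀ m, b m ∈ F) ∧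
      ∑ m ∈ S, b m * powerProduct e m ≠ 0 ∧
      u * ∑ m ∈ S, b m * powerProduct e m = ∑ m ∈ S, a m * powerProduct e m := by
  classical
  let Ψ : Multiplicative (ι → ℤ) →* E :=
    { toFun m := powerProduct e m.toAdd
      map_one' := powerProduct_zero
      map_mul' m m' := powerProduct_add he _ _ }
  let φ := AddMonoidAlgebra.lift F E (ι → ℤ) Ψ
  have hφ (f : AddMonoidAlgebra F (ι → ℤ)) {S : Finset (ι → ℤ)} (hS : f.coeff.support ⊆ S) :
      φ f = ∑ m ∈ S, (f.coeff m : E) * powerProduct e m := by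
    rw [AddMonoidAlgebra.lift_apply, Finsupp.sum, Finset.sum_subset hS fun m _ hm ↦ by
      simp [Finsupp.notMem_support_iff.mp hm]]
    rfl
  have hle : Subring.closure (↑F ∪ Set.range e) ≤ φ.range.toSubring := by
    rw [Subring.closure_le]
    rintro x (hx | ⟨i, rfl⟩)
    · exact ⟨algebraMap F _ ⟨x, hx⟩, φ.commutes _⟩
    · refine ⟨AddMonoidAlgebra.single (Pi.single i 1) 1, ?_⟩
      simp [φ, Ψ, powerProduct_single]
  obtain ⟨_, hy, _, hz, rfl⟩ := Subfield.mem_closure_iff.mp hu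
  obtain ⟨P, rfl⟩ := hle hy
  obtain ⟨Q, rfl⟩ := hle hz
  by_cases hQ : φ Q = 0
  · exact ⟨{0}, 0, 1, fun _ ↦ zero_mem F, fun _ ↦ one_mem F, by simp, by simp [hQ]⟩
  refine ⟨P.coeff.support ∪ Q.coeff.support, fun m ↦ P.coeff m, fun m ↦ Q.coeff m,
    fun m ↦ (P.coeff m).2, fun m ↦ (Q.coeff m).2, ?_, ?_⟩
  · rwa [← hφ Q Finset.subset_union_right]
  · rw [← hφ Q Finset.subset_union_right, ← hφ P Finset.subset_union_left]
    exact div_mul_cancel₀ (φ P) hQ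

end Representation

theorem Submodule.Quotient.sub_out_mem {R M : Type*} [Ring R] [AddCommGroup M] [Module R M]
    {p : Submodule R M} {m : M} {c : M ⧸ p} (h : Submodule.Quotient.mk m = c) :
    m - c.out ∈ p :=
  (Submodule.Quotient.eq p).mp (by rw [h, Submodule.Quotient.mk_out])

section Descent

variable {ι E : Type*} [Fintype ι] [Field E] [Differential E] {e : ι → E} {K : Subfield E}

theorem linearIndependent_powerProduct_out (hK : ∀ x ∈ K, x′ ∈ K)
    (hconst : ∀ x : E, x′ = 0 → x ∈ K) (he : ∀ i, e i ≠ 0) (hlog : ∀ i, logDeriv (e i) ∈ K) :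
    LinearIndependent K fun c : (ι → ℤ) ⧸ exponentSubmodule he K ↦ powerProduct e c.out := by
  refine linearIndependent_of_logDeriv_mem K hK hconst (fun _ ↦ powerProduct_ne_zero he _)
    (fun _ ↦ logDeriv_powerProduct_mem he hlog _) fun c c' hne h ↦ hne ?_
  rw [← powerProduct_sub he, ← mem_exponentSubmodule, ← Submodule.Quotient.eq] at h
  rwa [Submodule.Quotient.mk_out, Submodule.Quotient.mk_out] at h

open Classical in
theorem sum_filter_mul_powerProduct_eq_zero (hK : ∀ x ∈ K, x′ ∈ K)
    (hconst : ∀ x : E, x′ = 0 → x ∈ K) (he : ∀ i, e i ≠ 0) (hlog : ∀ i, logDeriv (e i) ∈ K)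
    {S : Finset (ι → ℤ)} {k : (ι → ℤ) → E} (hk : ∀ m ∈ S, k m ∈ K)
    (hsum : ∑ m ∈ S, k m * powerProduct e m = 0) (c : (ι → ℤ) ⧸ exponentSubmodule he K) :
    ∑ m ∈ S with Submodule.Quotient.mk m = c, k m * powerProduct e m = 0 := by
  classical
  set π : (ι → ℤ) → (ι → ℤ) ⧸ exponentSubmodule he K := Submodule.Quotient.mk
  have hmem (c) : ∑ m ∈ S with π m = c, k m * powerProduct e (m - c.out) ∈ K :=
    sum_mem fun m hm ↦ mul_mem (hk m (Finset.mem_filter.mp hm).1)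
      (Submodule.Quotient.sub_out_mem (Finset.mem_filter.mp hm).2)
  let k' (c) : K := ⟨_, hmem c⟩
  have hfiber (c) : ∑ m ∈ S with π m = c, k m * powerProduct e m = k' c • powerProduct e c.out :=
    sum_mul_powerProduct_eq he _ _ _
  by_cases hc : c ∈ S.image π
  · refine (hfiber c).trans ?_
    rw [linearIndependent_iff'.mp (linearIndependent_powerProduct_out hK hconst he hlog)
      (S.image π) k' ?_ c hc, zero_smul]
    simp_rw [← hfiber]
    rwa [Finset.sum_fiberwise_of_maps_to fun m hm ↦ Finset.mem_image_of_mem π hm]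
  · refine Finset.sum_eq_zero fun m hm ↦ absurd ?_ hc
    exact (Finset.mem_filter.mp hm).2 ▸ Finset.mem_image_of_mem π (Finset.mem_filter.mp hm).1

theorem mem_of_mul_sum_eq_sum {F L : Subfield E} (hK : ∀ x ∈ K, x′ ∈ K)
    (hconst : ∀ x : E, x′ = 0 → x ∈ K) (he : ∀ i, e i ≠ 0) (hlog : ∀ i, logDeriv (e i) ∈ K)
    (hFK : F ≤ K) (hFL : F ≤ L) (hKL : exponentSubmodule he K ≤ exponentSubmodule he L)
    {u : E} (hu : u ∈ K) {S : Finset (ι → ℤ)} {a b : (ι → ℤ) → E} (ha : ∀ m, a m ∈ F)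
    (hb : ∀ m, b m ∈ F) (hb₀ : ∑ m ∈ S, b m * powerProduct e m ≠ 0)
    (hab : u * ∑ m ∈ S, b m * powerProduct e m = ∑ m ∈ S, a m * powerProduct e m) : u ∈ L := by
  classical
  set π : (ι → ℤ) → (ι → ℤ) ⧸ exponentSubmodule he K := Submodule.Quotient.mk
  obtain ⟨c, -, hc⟩ : ∃ c ∈ S.image π, ∑ m ∈ S with π m = c, b m * powerProduct e m ≠ 0 := by
    refine Finset.exists_ne_zero_of_sum_ne_zero ?_
    rwa [Finset.sum_fiberwise_of_maps_to fun m hm ↦ Finset.mem_image_of_mem π hm]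
  have hfiber := sum_filter_mul_powerProduct_eq_zero hK hconst he hlog
    (S := S) (k := fun m ↦ a m - u * b m)
    (fun m _ ↦ sub_mem (hFK (ha m)) (mul_mem hu (hFK (hb m))))
    (by simp only [sub_mul, Finset.sum_sub_distrib, mul_assoc, ← Finset.mul_sum, hab, sub_self]) c
  simp only [sub_mul, Finset.sum_sub_distrib, mul_assoc, ← Finset.mul_sum, sub_eq_zero] at hfiber
  rw [sum_mul_powerProduct_eq he _ _ c.out] at hfiber hc
  rw [sum_mul_powerProduct_eq he _ _ c.out, ← mul_assoc] at hfiber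
  obtain ⟨hB₀, hP₀⟩ := mul_ne_zero_iff.mp hc
  have hmemL (x : (ι → ℤ) → E) (hx : ∀ m, x m ∈ F) :
      ∑ m ∈ S with π m = c, x m * powerProduct e (m - c.out) ∈ L :=
    sum_mem fun m hm ↦ mul_mem (hFL (hx m))
      (hKL (Submodule.Quotient.sub_out_mem (Finset.mem_filter.mp hm).2))
  rw [eq_div_of_mul_eq hB₀ (mul_right_cancel₀ hP₀ hfiber).symm]
  exact div_mem (hmemL a ha) (hmemL b hb)

end Descent

section DiffSubfieldClosure

variable {E : Type*} [Field E] {D : E → E} {s : Set E}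

lemma subset_diffSubfieldClosure : s ⊆ diffSubfieldClosure D s :=
  fun _ hx ↦ Subfield.mem_sInf.mpr fun _ hL ↦ hL.1 hx

lemma map_mem_diffSubfieldClosure {x : E} (hx : x ∈ diffSubfieldClosure D s) :
    D x ∈ diffSubfieldClosure D s :=
  Subfield.mem_sInf.mpr fun L hL ↦ hL.2 x (Subfield.mem_sInf.mp hx L hL)

lemma diffSubfieldClosure_le {L : Subfield E} (hs : s ⊆ L) (hL : ∀ a ∈ L, D a ∈ L) :
    diffSubfieldClosure D s ≤ L :=
  sInf_le ⟨hs, hL⟩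

end DiffSubfieldClosure

@[reducible]
def IsDerivation.toDifferential {E : Type*} [Field E] {D : E → E} (hD : IsDerivation D) :
    Differential E where
  deriv := Derivation.mk' (AddMonoidHom.mk' D hD.map_add).toIntLinearMap fun a b ↦ by
    simp only [AddMonoidHom.coe_toIntLinearMap, AddMonoidHom.mk'_apply, hD.leibniz, smul_eq_mul]
    ring

theorem exponential_extension_singly_generated_structure_general
    {E : Type*} [Field E]
    (D : E → E) (hD : IsDerivation D)
    (F : Subfield E) (hF : ∀ a ∈ F, D a ∈ F)
    (hNNC : ∀ a : E, D a = 0 → a ∈ F)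
    {n : ℕ} (e : Fin n → E) (he0 : ∀ i, e i ≠ 0) (he : ∀ i, D (e i) / e i ∈ F)
    (hgen : Subfield.closure (↑F ∪ Set.range e) = ⊤)
    (u : E) :
    ∃ (t : ℕ) (p : Fin t → E),
      (∀ j, ∃ m : Fin n → ℤ, p j = ∏ i, e i ^ m i) ∧
      diffSubfieldClosure D (↑F ∪ {u}) = Subfield.closure (↑F ∪ Set.range p) := by
  -- Under this instance `x′` unfolds to `D x`, so the hypotheses on `D` apply as they stand.
  let := hD.toDifferential
  set K := diffSubfieldClosure D (↑F ∪ {u})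
  have hFK : F ≤ K := fun x hx ↦ subset_diffSubfieldClosure (Or.inl hx)
  have hK : ∀ x ∈ K, x′ ∈ K := fun _ ↦ map_mem_diffSubfieldClosure
  have hlog : ∀ i, logDeriv (e i) ∈ F := he
  obtain ⟨t, s, hs⟩ := Submodule.fg_iff_exists_fin_generating_family.mp
    (IsNoetherian.noetherian (exponentSubmodule he0 K))
  set L := Subfield.closure (↑F ∪ Set.range (powerProduct e ∘ s))
  have hFL : F ≤ L := fun x hx ↦ Subfield.subset_closure (Or.inl hx)
  have hpL (j : Fin t) : powerProduct e (s j) ∈ L := Subfield.subset_closure (Or.inr ⟨j, rfl⟩)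
  have hKL : exponentSubmodule he0 K ≤ exponentSubmodule he0 L :=
    hs ▸ Submodule.span_le.mpr (Set.range_subset_iff.mpr hpL)
  have huL : u ∈ L := by
    obtain ⟨S, a, b, ha, hb, hb₀, hab⟩ :=
      exists_mul_sum_eq_sum_of_mem_closure F he0 (hgen ▸ Subfield.mem_top u)
    exact mem_of_mul_sum_eq_sum hK (fun x hx ↦ hFK (hNNC x hx)) he0 (fun i ↦ hFK (hlog i)) hFK hFL
      hKL (subset_diffSubfieldClosure (Or.inr rfl)) ha hb hb₀ hab
  refine ⟨t, powerProduct e ∘ s, fun j ↦ ⟨s j, rfl⟩, le_antisymm ?_ ?_⟩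
  · refine diffSubfieldClosure_le (Set.union_subset hFL (Set.singleton_subset_iff.mpr huL))
      fun x hx ↦ Subfield.deriv_mem_closure ?_ hx
    rintro _ (hx | ⟨j, rfl⟩)
    · exact hFL (hF _ hx)
    · rw [Function.comp_apply, deriv_eq_logDeriv_mul (powerProduct_ne_zero he0 _)]
      exact mul_mem (hFL (logDeriv_powerProduct_mem he0 hlog _)) (hpL j)
  · refine Subfield.closure_le.mpr (Set.union_subset hFK ?_)
    rintro _ ⟨j, rfl⟩
    have hsK : s j ∈ exponentSubmodule he0 K := hs ▸ Submodule.subset_span ⟨j, rfl⟩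
    exact hsK

/-- Let `E = F(e₁,…,eₙ)` be a no-new-constants differential field extension of a
characteristic-zero differential field `F` with algebraically closed field of
constants `C`, where the `eᵢ` are nonzero, satisfy `eᵢ'/eᵢ ∈ F`, and are
algebraically independent over `F`.  Then for every `u ∈ E` there are finitely many
power products `p₁, …, p_t` of the `eᵢ` (with integer exponents) such that the
differential subfield `F⟨u⟩` equals `F(p₁, …, p_t)`. -/
theorem exponential_extension_singly_generated_structure
    {E : Type*} [Field E] [CharZero E]
    (D : E → E) (hD : IsDerivation D)
    (F : Subfield E) (hF : ∀ a ∈ F, D a ∈ F)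
    (C : Subfield E) (hC : ∀ c : E, c ∈ C ↔ (c ∈ F ∧ D c = 0))
    [IsAlgClosed C]
    (hNNC : ∀ a : E, D a = 0 → a ∈ F)
    {n : ℕ} (e : Fin n → E) (he0 : ∀ i, e i ≠ 0) (he : ∀ i, D (e i) / e i ∈ F)
    (hind : AlgebraicIndependent F e)
    (hgen : Subfield.closure (↑F ∪ Set.range e) = ⊤)
    (u : E) :
    ∃ (t : ℕ) (p : Fin t → E),
      (∀ j, ∃ m : Fin n → ℤ, p j = ∏ i, e i ^ m i) ∧
      diffSubfieldClosure D (↑F ∪ {u}) = Subfield.closure (↑F ∪ Set.range p) :=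
  exponential_extension_singly_generated_structure_general D hD F hF hNNC e he0 he hgen u
end
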